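/- In the proof of the perturbed invariance theorem, the key dissipation inequality holds: with V(x) = sup_{|ν|≤κ} | |f(x,ν) − g(x)| − |ν| | − ζ_κ(θ), one has for any τ ≥ 0, V(x(t+1)) − τV(x(t)) ≤ (θ − τ)|Δg_t| + (1+τ)κ + ζ_κ(θ)(τ − 1), where Δg_t = g(x(t+1)) − g(x(t)). -/

import Mathlib

open Set

/-
Write `S(y) = sup_{|ν| ≤ κ} ||f(y,ν) − g(y)| − |ν||` (`perturbationGap`), so that `V = S − ζ_κ(θ)`,
and `Δ = |g(x(t+1)) − g(x(t))|`.
Since `g` is monotone, `|∂f/∂x| ≤ θ|g'|` integrates to `|f(b,ν) − f(a,ν)| ≤ θ|g(b) − g(a)|`, and `f` is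
1-Lipschitz in `u`. Hence `|f(x(t+1),ν) − g(x(t+1))| = |f(x(t+1),ν) − f(x(t),u(t))| ≤ θΔ + |ν| + κ`, which
gives `S(x(t+1)) ≤ θΔ + κ`; choosing `ν = u(t)` gives `S(x(t)) ≥ Δ − κ`. The inequality is a linear
combination of these two bounds.
-/

noncomputable def perturbationGap (f : ℝ → ℝ → ℝ) (g : ℝ → ℝ) (κ y : ℝ) : ℝ :=
  ⨆ ν : Icc (-κ) κ, |(|f y ν - g y| - |ν.1|)|

lemma abs_sub_le_sub_of_abs_deriv_le_deriv {φ G : ℝ → ℝ} (hφ : Differentiable ℝ φ)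
    (hG : Differentiable ℝ G) (h : ∀ s, |deriv φ s| ≤ deriv G s) {a b : ℝ} (hab : a ≤ b) :
    |φ b - φ a| ≤ G b - G a := by
  have h_sub : Monotone (fun s => G s - φ s) :=
    monotone_of_deriv_nonneg (hG.sub hφ) fun s => by
      rw [deriv_fun_sub (hG s) (hφ s)]
      linarith [h s, le_abs_self (deriv φ s)]
  have h_add : Monotone (fun s => G s + φ s) :=
    monotone_of_deriv_nonneg (hG.add hφ) fun s => by
      rw [deriv_fun_add (hG s) (hφ s)]
      linarith [h s, neg_abs_le (deriv φ s)]
  have h₁ := h_sub hab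
  have h₂ := h_add hab
  simp only at h₁ h₂
  rw [abs_le]
  constructor <;> linarith

lemma Monotone.abs_sub_le_mul_abs_sub_of_abs_deriv_le {g φ : ℝ → ℝ} {θ : ℝ} (hg : Monotone g)
    (hgd : Differentiable ℝ g) (hφ : Differentiable ℝ φ)
    (h : ∀ s, |deriv φ s| ≤ θ * |deriv g s|) (a b : ℝ) :
    |φ b - φ a| ≤ θ * |g b - g a| := by
  wlog hab : a ≤ b generalizing a b
  · rw [abs_sub_comm, abs_sub_comm (g b)]
    exact this b a (le_of_not_ge hab)
  have hG : ∀ s, |deriv φ s| ≤ deriv (fun s => θ * g s) s := fun s => by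
    rw [deriv_const_mul θ (hgd s), ← abs_of_nonneg hg.deriv_nonneg]
    exact h s
  calc |φ b - φ a| ≤ θ * g b - θ * g a :=
        abs_sub_le_sub_of_abs_deriv_le_deriv hφ (hgd.const_mul θ) hG hab
    _ = θ * |g b - g a| := by rw [abs_of_nonneg (sub_nonneg.2 (hg hab)), mul_sub]

lemma abs_sub_le_mul_abs_sub_of_abs_deriv_le {g φ : ℝ → ℝ} {θ : ℝ}
    (hg : Monotone g ∨ Antitone g) (hgd : Differentiable ℝ g) (hφ : Differentiable ℝ φ)
    (h : ∀ s, |deriv φ s| ≤ θ * |deriv g s|) (a b : ℝ) :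
    |φ b - φ a| ≤ θ * |g b - g a| := by
  rcases hg with hg | hg
  · exact hg.abs_sub_le_mul_abs_sub_of_abs_deriv_le hgd hφ h a b
  · have h' : ∀ s, |deriv φ s| ≤ θ * |deriv (fun s => -g s) s| := fun s => by
      rw [deriv.fun_neg, abs_neg]
      exact h s
    have := hg.neg.abs_sub_le_mul_abs_sub_of_abs_deriv_le hgd.neg hφ h' a b
    rwa [neg_sub_neg, abs_sub_comm (g a)] at this

lemma perturbationGap_le {f : ℝ → ℝ → ℝ} {g : ℝ → ℝ} {θ κ y y' u : ℝ} (hθ : 0 ≤ θ)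
    (hu : |u| ≤ κ) (hy' : g y' = f y u)
    (hfx : ∀ ν, |ν| ≤ κ → |f y' ν - f y ν| ≤ θ * |g y' - g y|)
    (hfu : ∀ ν ∈ Icc (-κ) κ, |f y ν - f y u| ≤ |ν - u|) :
    perturbationGap f g κ y' ≤ θ * |g y' - g y| + κ := by
  have : Nonempty (Icc (-κ) κ) := ⟨⟨0, by linarith [abs_nonneg u], by linarith [abs_nonneg u]⟩⟩
  refine ciSup_le fun ν => ?_
  have hν : |ν.1| ≤ κ := abs_le.2 ν.2
  have h_gap : |f y' ν - g y'| ≤ θ * |g y' - g y| + (|ν.1| + |u|) :=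
    calc |f y' ν - g y'| = |(f y' ν - f y ν) + (f y ν - f y u)| := by rw [hy', sub_add_sub_cancel]
      _ ≤ |f y' ν - f y ν| + |f y ν - f y u| := abs_add_le _ _
      _ ≤ θ * |g y' - g y| + (|ν.1| + |u|) :=
        add_le_add (hfx ν hν) ((hfu ν ν.2).trans (abs_sub _ _))
  have := mul_nonneg hθ (abs_nonneg (g y' - g y))
  rw [abs_le]
  constructor <;> linarith [abs_nonneg (f y' ν - g y')]

lemma sub_le_perturbationGap {f : ℝ → ℝ → ℝ} {g : ℝ → ℝ} {κ y y' u : ℝ}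
    (hf : Continuous (f y)) (hu : |u| ≤ κ) (hy' : g y' = f y u) :
    |g y' - g y| - κ ≤ perturbationGap f g κ y := by
  have hbdd : BddAbove (range fun ν : Icc (-κ) κ => |(|f y ν - g y| - |ν.1|)|) :=
    (isCompact_range (by fun_prop)).bddAbove
  calc |g y' - g y| - κ ≤ |g y' - g y| - |u| := by linarith
    _ ≤ |(|f y u - g y| - |u|)| := by rw [← hy']; exact le_abs_self _
    _ ≤ perturbationGap f g κ y := le_ciSup hbdd ⟨u, abs_le.1 hu⟩

theorem stmt_12_general (g : ℝ → ℝ) (f : ℝ → ℝ → ℝ) (θ κ : ℝ)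
    (hg : ContDiff ℝ 1 g) (hgmono : Monotone g ∨ Antitone g)
    (hf : ContDiff ℝ 1 (fun p : ℝ × ℝ => f p.1 p.2))
    (hθ0 : 0 ≤ θ)
    (hdu : ∀ x u : ℝ, |u| ≤ κ → |deriv (fun u' => f x u') u| ≤ 1)
    (hdx : ∀ x u : ℝ, |u| ≤ κ → |deriv (fun x' => f x' u) x| ≤ θ * |deriv g x|)
    (x u : ℕ → ℝ) (hu : ∀ t, |u t| ≤ κ)
    (htraj : ∀ t, g (x (t + 1)) = f (x t) (u t)) :
    ∀ τ : ℝ, 0 ≤ τ → ∀ t,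
      ((⨆ ν : Set.Icc (-κ) κ, |(|f (x (t + 1)) ν.1 - g (x (t + 1))| - |ν.1|)|)
          - κ * (1 + θ) / (1 - θ))
        - τ * ((⨆ ν : Set.Icc (-κ) κ, |(|f (x t) ν.1 - g (x t)| - |ν.1|)|)
          - κ * (1 + θ) / (1 - θ))
      ≤ (θ - τ) * |g (x (t + 1)) - g (x t)| + (1 + τ) * κ
          + κ * (1 + θ) / (1 - θ) * (τ - 1) := by
  intro τ hτ t
  have hfd : Differentiable ℝ (fun p : ℝ × ℝ => f p.1 p.2) := hf.differentiable one_ne_zero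
  have hfx : ∀ ν, |ν| ≤ κ → ∀ a b, |f b ν - f a ν| ≤ θ * |g b - g a| := fun ν hν =>
    abs_sub_le_mul_abs_sub_of_abs_deriv_le hgmono (hg.differentiable one_ne_zero)
      (by fun_prop) (fun s => hdx s ν hν)
  have hfu : ∀ y, ∀ ν ∈ Icc (-κ) κ, ∀ ν' ∈ Icc (-κ) κ, |f y ν - f y ν'| ≤ |ν - ν'| :=
    fun y ν hν ν' hν' => by
      simpa only [Real.norm_eq_abs, one_mul] using
        (convex_Icc (-κ) κ).norm_image_sub_le_of_norm_deriv_le (C := 1)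
        (fun s _ => (by fun_prop : Differentiable ℝ (f y)) s)
        (fun s hs => by simpa only [Real.norm_eq_abs] using hdu y s (abs_le.2 hs)) hν' hν
  have h_up := perturbationGap_le hθ0 (hu t) (htraj t) (fun ν hν => hfx ν hν (x t) (x (t + 1)))
    (fun ν hν => hfu (x t) ν hν (u t) (abs_le.1 (hu t)))
  have h_lo := sub_le_perturbationGap (by fun_prop) (hu t) (htraj t)
  unfold perturbationGap at h_up h_lo
  linarith [mul_le_mul_of_nonneg_left h_lo hτ]

/-- the key dissipation inequality for the perturbed invariance
theorem: with `V(x) = sup_{|ν|≤κ} ||f(x,ν) − g(x)| − |ν|| − ζ_κ(θ)`, for every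
`τ ≥ 0`, `V(x(t+1)) − τV(x(t)) ≤ (θ−τ)|Δg_t| + (1+τ)κ + ζ_κ(θ)(τ−1)`. -/
theorem stmt_12 (g : ℝ → ℝ) (f : ℝ → ℝ → ℝ) (θ κ : ℝ)
    (hg : ContDiff ℝ 1 g) (hgmono : Monotone g ∨ Antitone g)
    (hf : ContDiff ℝ 1 (fun p : ℝ × ℝ => f p.1 p.2))
    (hκ : 0 < κ) (hθ0 : 0 ≤ θ) (hθ1 : θ < 1)
    (hdu : ∀ x u : ℝ, |u| ≤ κ → |deriv (fun u' => f x u') u| ≤ 1)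
    (hdx : ∀ x u : ℝ, |u| ≤ κ → |deriv (fun x' => f x' u) x| ≤ θ * |deriv g x|)
    (x u : ℕ → ℝ) (hu : ∀ t, |u t| ≤ κ)
    (htraj : ∀ t, g (x (t + 1)) = f (x t) (u t)) :
    ∀ τ : ℝ, 0 ≤ τ → ∀ t,
      ((⨆ ν : Set.Icc (-κ) κ, |(|f (x (t + 1)) ν.1 - g (x (t + 1))| - |ν.1|)|)
          - κ * (1 + θ) / (1 - θ))
        - τ * ((⨆ ν : Set.Icc (-κ) κ, |(|f (x t) ν.1 - g (x t)| - |ν.1|)|)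
          - κ * (1 + θ) / (1 - θ))
      ≤ (θ - τ) * |g (x (t + 1)) - g (x t)| + (1 + τ) * κ
          + κ * (1 + θ) / (1 - θ) * (τ - 1) :=
  stmt_12_general g f θ κ hg hgmono hf hθ0 hdu hdx x u hu htraj
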